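/- arXiv:1211.3826 — 5 statements merged into one kernel-verified Lean document; each statement's English description precedes it below -/
import Mathlib

section
/- For every f ∈ L_1[0,1], the integral ∫₀ᵗ (t−s)^{α(t)−1} |f(s)| ds is finite for Lebesgue-almost every t ∈ [0,1]; consequently (R^{α(·)}f)(t) is well-defined for almost all t ∈ [0,1]. -/
open MeasureTheory Real Set Filter
open scoped ENNReal NNReal

/-- The Riemann–Liouville operator of variable order `α(·)`:
`(R^{α(·)}f)(t) = (1/Γ(α(t))) ∫₀ᵗ (t−s)^{α(t)−1} f(s) ds`. -/
noncomputable def RL (α f : ℝ → ℝ) (t : ℝ) : ℝ :=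
  (1 / Real.Gamma (α t)) * ∫ s in Set.Ioc (0 : ℝ) t, (t - s) ^ (α t - 1) * f s

/-! For a fixed order `ε > 0` the kernel `u ↦ u^(ε-1)` is integrable on `(0,1)`, so its
convolution with the integrable function `|f|` exists almost everywhere. Since `(t-s)^(β-1)` is
antitone in `β` for `0 < t - s < 1`, this gives the claim for almost every `t` with
`α(t) ≥ ε`; taking `ε = 1/(n+1)` for all `n` covers every `t` with `α(t) > 0`. -/

lemma integrable_indicator_Ioo_rpow {ε : ℝ} (hε : 0 < ε) :
    Integrable ((Ioo (0 : ℝ) 1).indicator (fun u => u ^ (ε - 1))) := by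
  rw [integrable_indicator_iff measurableSet_Ioo,
    intervalIntegral.integrableOn_Ioo_rpow_iff zero_lt_one]
  linarith

lemma ae_integrableOn_Ioo_rpow_mul_abs {f : ℝ → ℝ} (hf : IntegrableOn f (Icc 0 1))
    {ε : ℝ} (hε : 0 < ε) :
    ∀ᵐ t ∂volume.restrict (Icc (0 : ℝ) 1),
      IntegrableOn (fun s => (t - s) ^ (ε - 1) * |f s|) (Ioo 0 t) := by
  have hconv := ((integrable_indicator_iff measurableSet_Icc).2 hf.abs).ae_convolution_exists
    (ContinuousLinearMap.mul ℝ ℝ) (integrable_indicator_Ioo_rpow hε)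
  filter_upwards [ae_restrict_of_ae hconv, ae_restrict_mem measurableSet_Icc]
    with t ht ⟨_, ht1⟩
  refine (ht.integrableOn (s := Ioo 0 t)).congr_fun (fun s ⟨hs0, hst⟩ => ?_) measurableSet_Ioo
  have hs : s ∈ Icc (0 : ℝ) 1 := ⟨hs0.le, by linarith⟩
  have hts : t - s ∈ Ioo (0 : ℝ) 1 := ⟨by linarith, by linarith⟩
  simp only [ContinuousLinearMap.mul_apply', indicator_of_mem hs, indicator_of_mem hts]
  ring

lemma integrableOn_rpow_mul_of_exponent_le {g : ℝ → ℝ} {t ε β : ℝ} (ht : t ≤ 1)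
    (hεβ : ε ≤ β) (hg : AEStronglyMeasurable g (volume.restrict (Ioo 0 t)))
    (h : IntegrableOn (fun s => (t - s) ^ (ε - 1) * g s) (Ioo 0 t)) :
    IntegrableOn (fun s => (t - s) ^ (β - 1) * g s) (Ioo 0 t) := by
  have hker : Measurable fun s => (t - s) ^ (β - 1) := by fun_prop
  refine Integrable.mono h (hker.aestronglyMeasurable.mul hg)
    ((ae_restrict_iff' measurableSet_Ioo).2 (ae_of_all _ fun s ⟨hs0, hst⟩ => ?_))
  have hts : 0 < t - s := by linarith
  rw [norm_mul, norm_mul, norm_of_nonneg (rpow_nonneg hts.le _),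
    norm_of_nonneg (rpow_nonneg hts.le _)]
  exact mul_le_mul_of_nonneg_right
    (rpow_le_rpow_of_exponent_ge hts (by linarith) (by linarith)) (norm_nonneg _)

theorem stmt_1_general (α : ℝ → ℝ)
    (hpos : ∀ᵐ t ∂(volume.restrict (Set.Icc (0 : ℝ) 1)), 0 < α t)
    (f : ℝ → ℝ) (hf : MemLp f 1 (volume.restrict (Set.Icc (0 : ℝ) 1))) :
    ∀ᵐ t ∂(volume.restrict (Set.Icc (0 : ℝ) 1)),
      IntegrableOn (fun s => (t - s) ^ (α t - 1) * |f s|) (Set.Ioc (0 : ℝ) t) := by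
  have hfi : IntegrableOn f (Icc 0 1) := memLp_one_iff_integrable.1 hf
  have hfixed : ∀ᵐ t ∂volume.restrict (Icc (0 : ℝ) 1), ∀ n : ℕ,
      IntegrableOn (fun s => (t - s) ^ ((1 / (n + 1) : ℝ) - 1) * |f s|) (Ioo 0 t) :=
    ae_all_iff.2 fun n => ae_integrableOn_Ioo_rpow_mul_abs hfi (by positivity)
  filter_upwards [hfixed, hpos, ae_restrict_mem measurableSet_Icc] with t ht hαt ⟨_, ht1⟩
  obtain ⟨n, hn⟩ := exists_nat_one_div_lt hαt
  have hfm : AEStronglyMeasurable (fun s => |f s|) (volume.restrict (Ioo 0 t)) :=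
    (hfi.mono_set (Ioo_subset_Icc_self.trans (Icc_subset_Icc_right ht1))).1.norm
  rw [integrableOn_Ioc_iff_integrableOn_Ioo]
  exact integrableOn_rpow_mul_of_exponent_le ht1 hn.le hfm (ht n)

/-- **Proposition (existence of the fractional integral).**
If `α : [0,1] → ℝ` is measurable with `α(t) > 0` a.e. and `f ∈ L_1[0,1]`, then for almost
every `t ∈ [0,1]` the function `s ↦ (t−s)^{α(t)−1} |f(s)|` is integrable on `(0,t)`;
hence `(R^{α(·)}f)(t)` is well-defined for almost all `t ∈ [0,1]`. -/
theorem stmt_1 (α : ℝ → ℝ) (hα : Measurable α)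
    (hpos : ∀ᵐ t ∂(volume.restrict (Set.Icc (0 : ℝ) 1)), 0 < α t)
    (f : ℝ → ℝ) (hf : MemLp f 1 (volume.restrict (Set.Icc (0 : ℝ) 1))) :
    ∀ᵐ t ∂(volume.restrict (Set.Icc (0 : ℝ) 1)),
      IntegrableOn (fun s => (t - s) ^ (α t - 1) * |f s|) (Set.Ioc (0 : ℝ) t) :=
  stmt_1_general α hpos f hf
end

section
/- There is a universal constant c > 0 such that for every measurable function α : [0,1] → ℝ with α(t) > 0 almost everywhere, every f ∈ L_1[0,1] and every u > 0, the Lebesgue measure of the set {t ∈ [0,1] : |(R^{α(·)}f)(t)| ≥ u} is at most c ‖f‖_1 / u. In other words, R^{α(·)} is a bounded operator from L_1[0,1] into the Lorentz (weak-L_1) space L_{1,∞}[0,1], with a bound independent of α. -/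
open MeasureTheory Real Set Metric
open scoped ENNReal

lemma exp_neg_one_le_Gamma {x : ℝ} (hx : 1 ≤ x) : exp (-1) ≤ Gamma x := by
  have hx0 : 0 < x := by linarith
  have hint : IntegrableOn (fun s ↦ exp (-s) * s ^ (x - 1)) (Ioi 0) :=
    GammaIntegral_convergent hx0
  rw [Gamma_eq_integral hx0, ← integral_exp_neg_Ioi 1]
  calc ∫ s in Ioi 1, exp (-s)
      ≤ ∫ s in Ioi 1, exp (-s) * s ^ (x - 1) := by
        refine setIntegral_mono_on ?_ (hint.mono_set (Ioi_subset_Ioi zero_le_one))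
          measurableSet_Ioi fun s (hs : 1 < s) ↦ ?_
        · simpa using exp_neg_integrableOn_Ioi 1 one_pos
        · exact le_mul_of_one_le_right (exp_pos _).le (one_le_rpow hs.le (by linarith))
    _ ≤ ∫ s in Ioi 0, exp (-s) * s ^ (x - 1) := by
        refine setIntegral_mono_set hint ?_ (Ioi_subset_Ioi zero_le_one).eventuallyLE
        filter_upwards [self_mem_ae_restrict measurableSet_Ioi] with s (hs : 0 < s)
        positivity

lemma one_div_Gamma_le_exp_one {a : ℝ} (ha : 1 ≤ a) : 1 / Gamma a ≤ exp 1 := by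
  rw [div_le_iff₀ (Gamma_pos_of_pos (by linarith))]
  calc 1 = exp 1 * exp (-1) := by rw [← exp_add, add_neg_cancel, exp_zero]
    _ ≤ exp 1 * Gamma a := by gcongr; exact exp_neg_one_le_Gamma ha

lemma one_div_Gamma_le_mul_exp_one {a : ℝ} (ha : 0 < a) : 1 / Gamma a ≤ a * exp 1 := by
  have h := one_div_Gamma_le_exp_one (by linarith : 1 ≤ a + 1)
  rwa [Gamma_add_one ha.ne', one_div, mul_inv, ← div_eq_inv_mul, div_le_iff₀ ha, mul_comm,
    ← one_div] at h

lemma div_two_le_one_sub_inv_two_rpow {a : ℝ} (h0 : 0 ≤ a) (h1 : a ≤ 1) :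
    a / 2 ≤ 1 - 2⁻¹ ^ a := by
  have h := geom_mean_le_arith_mean2_weighted h0 (sub_nonneg.2 h1) (by norm_num : (0:ℝ) ≤ 2⁻¹)
    zero_le_one (by ring)
  rw [one_rpow, mul_one] at h
  linarith

noncomputable def dyadicLeftMaximal (G : ℝ → ℝ≥0∞) (t : ℝ) : ℝ≥0∞ :=
  ⨆ k : ℕ, 2 ^ k * ∫⁻ s in Icc (t - 2⁻¹ ^ k) t, G s

lemma setLIntegral_Icc_le_dyadicLeftMaximal (G : ℝ → ℝ≥0∞) (t : ℝ) (k : ℕ) :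
    ∫⁻ s in Icc (t - 2⁻¹ ^ k) t, G s ≤ 2⁻¹ ^ k * dyadicLeftMaximal G t :=
  calc _ = 2⁻¹ ^ k * (2 ^ k * ∫⁻ s in Icc (t - 2⁻¹ ^ k) t, G s) := by
        rw [← mul_assoc, ← mul_pow, ENNReal.inv_mul_cancel two_ne_zero ENNReal.ofNat_ne_top,
          one_pow, one_mul]
    _ ≤ _ := by
        gcongr
        exact le_iSup (fun k : ℕ ↦ 2 ^ k * ∫⁻ s in Icc (t - 2⁻¹ ^ k) t, G s) k

lemma Ico_sub_one_subset_iUnion_Ico_sub_inv_two_pow (t : ℝ) :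
    Ico (t - 1) t ⊆ ⋃ k : ℕ, Ico (t - 2⁻¹ ^ k) (t - 2⁻¹ ^ (k + 1)) := by
  rintro s ⟨hs₁, hs₂⟩
  obtain ⟨k, hk₁, hk₂⟩ := exists_nat_pow_near_of_lt_one (sub_pos.2 hs₂) (by linarith)
    (by norm_num : (0 : ℝ) < 2⁻¹) (by norm_num)
  exact mem_iUnion.2 ⟨k, by linarith, by linarith⟩

lemma setLIntegral_rpow_mul_le_dyadicLeftMaximal {a : ℝ} (ha : 1 ≤ a) (G : ℝ → ℝ≥0∞) (t : ℝ) :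
    ∫⁻ s in Ico (t - 1) t, ENNReal.ofReal ((t - s) ^ (a - 1)) * G s ≤
      dyadicLeftMaximal G t :=
  calc _ ≤ ∫⁻ s in Icc (t - 2⁻¹ ^ 0) t, G s := by
        rw [pow_zero]
        refine (setLIntegral_mono' measurableSet_Ico fun s hs ↦ ?_).trans
          (lintegral_mono_set Ico_subset_Icc_self)
        exact mul_le_of_le_one_left (by positivity) (ENNReal.ofReal_le_one.2
          (rpow_le_one (by linarith [hs.2]) (by linarith [hs.1]) (by linarith)))
    _ ≤ dyadicLeftMaximal G t := by
        simpa using setLIntegral_Icc_le_dyadicLeftMaximal G t 0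

lemma setLIntegral_rpow_mul_le_div_mul_dyadicLeftMaximal {a : ℝ} (ha₀ : 0 < a) (ha₁ : a ≤ 1)
    (G : ℝ → ℝ≥0∞) (t : ℝ) :
    ∫⁻ s in Ico (t - 1) t, ENNReal.ofReal ((t - s) ^ (a - 1)) * G s ≤
      ENNReal.ofReal (4 / a) * dyadicLeftMaximal G t := by
  set q : ℝ := 2⁻¹ ^ a
  have hq₀ : 0 ≤ q := by positivity
  have hq₁ : a / 2 ≤ 1 - q := div_two_le_one_sub_inv_two_rpow ha₀.le ha₁
  -- on the `k`-th shell `t - s > 2⁻¹ ^ (k + 1)`, where the kernel is decreasing in `t - s`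
  have shell (k : ℕ) :
      ∫⁻ s in Ico (t - 2⁻¹ ^ k) (t - 2⁻¹ ^ (k + 1)), ENNReal.ofReal ((t - s) ^ (a - 1)) * G s ≤
        ENNReal.ofReal ((2 * q) ^ (k + 1)) * ∫⁻ s in Icc (t - 2⁻¹ ^ k) t, G s := by
    have hb : (2⁻¹ ^ (k + 1) : ℝ) ^ (a - 1) = (2 * q) ^ (k + 1) := by
      rw [← rpow_pow_comm (by norm_num), rpow_sub_one (by norm_num), div_inv_eq_mul, mul_comm]
    rw [← lintegral_const_mul' _ _ ENNReal.ofReal_ne_top]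
    have hr : (0 : ℝ) < 2⁻¹ ^ (k + 1) := by positivity
    refine (setLIntegral_mono' measurableSet_Ico fun s hs ↦ ?_).trans
      (lintegral_mono_set (Ico_subset_Icc_self.trans (Icc_subset_Icc_right (by linarith))))
    rw [← hb]
    gcongr ENNReal.ofReal ?_ * _
    exact rpow_le_rpow_of_nonpos hr (by linarith [hs.2]) (by linarith)
  have hsum : ∑' k : ℕ, ENNReal.ofReal ((2 * q) ^ (k + 1)) * 2⁻¹ ^ k =
      ENNReal.ofReal (2 * q * (1 - q)⁻¹) := by
    have hq : q < 1 := by linarith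
    have hterm (k : ℕ) : ENNReal.ofReal ((2 * q) ^ (k + 1)) * 2⁻¹ ^ k =
        ENNReal.ofReal (2 * q * q ^ k) := by
      rw [← ENNReal.ofReal_ofNat 2, ← ENNReal.ofReal_inv_of_pos two_pos, ← ENNReal.ofReal_pow
        (by norm_num), ← ENNReal.ofReal_mul (by positivity)]
      congr 1
      rw [inv_pow]
      field_simp
      ring
    simp_rw [hterm]
    rw [← ENNReal.ofReal_tsum_of_nonneg (fun k ↦ by positivity)
      ((summable_geometric_of_lt_one hq₀ hq).mul_left _), tsum_mul_left,
      tsum_geometric_of_lt_one hq₀ hq]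
  calc _ ≤ ∑' k : ℕ, ∫⁻ s in Ico (t - 2⁻¹ ^ k) (t - 2⁻¹ ^ (k + 1)),
          ENNReal.ofReal ((t - s) ^ (a - 1)) * G s :=
        (lintegral_mono_set (Ico_sub_one_subset_iUnion_Ico_sub_inv_two_pow t)).trans
          (lintegral_iUnion_le _ _)
    _ ≤ ∑' k : ℕ, ENNReal.ofReal ((2 * q) ^ (k + 1)) * (2⁻¹ ^ k * dyadicLeftMaximal G t) :=
        ENNReal.tsum_le_tsum fun k ↦ (shell k).trans
          (by gcongr; exact setLIntegral_Icc_le_dyadicLeftMaximal G t k)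
    _ = ENNReal.ofReal (2 * q * (1 - q)⁻¹) * dyadicLeftMaximal G t := by
        simp_rw [← mul_assoc]
        rw [ENNReal.tsum_mul_right, hsum]
    _ ≤ ENNReal.ofReal (4 / a) * dyadicLeftMaximal G t := by
        gcongr
        rw [← div_eq_mul_inv, div_le_div_iff₀ (by linarith) ha₀]
        nlinarith [rpow_le_one (by norm_num : (0:ℝ) ≤ 2⁻¹) (by norm_num) ha₀.le]

lemma ofReal_one_div_Gamma_mul_setLIntegral_rpow_mul_le {a : ℝ} (ha : 0 < a) (G : ℝ → ℝ≥0∞)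
    (t : ℝ) :
    ENNReal.ofReal (1 / Gamma a) *
        ∫⁻ s in Ico (t - 1) t, ENNReal.ofReal ((t - s) ^ (a - 1)) * G s ≤
      12 * dyadicLeftMaximal G t := by
  have he : exp 1 ≤ 3 := by linarith [exp_one_lt_d9]
  rcases le_or_gt 1 a with ha₁ | ha₁
  · calc _ ≤ ENNReal.ofReal (exp 1) * dyadicLeftMaximal G t := by
          gcongr
          · exact one_div_Gamma_le_exp_one ha₁
          · exact setLIntegral_rpow_mul_le_dyadicLeftMaximal ha₁ G t
      _ ≤ 12 * dyadicLeftMaximal G t := by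
          gcongr
          rw [← ENNReal.ofReal_ofNat]
          exact ENNReal.ofReal_le_ofReal (by linarith)
  · calc _ ≤ ENNReal.ofReal (a * exp 1) * (ENNReal.ofReal (4 / a) * dyadicLeftMaximal G t) := by
          gcongr
          · exact one_div_Gamma_le_mul_exp_one ha
          · exact setLIntegral_rpow_mul_le_div_mul_dyadicLeftMaximal ha ha₁.le G t
      _ = ENNReal.ofReal (4 * exp 1) * dyadicLeftMaximal G t := by
          rw [← mul_assoc, ← ENNReal.ofReal_mul (by positivity)]
          field_simp
      _ ≤ 12 * dyadicLeftMaximal G t := by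
          gcongr
          rw [← ENNReal.ofReal_ofNat]
          exact ENNReal.ofReal_le_ofReal (by linarith)

lemma volume_setOf_mul_le_measure_closedBall_le (ν : Measure ℝ) {c : ℝ≥0∞} (hc₀ : c ≠ 0)
    (hc : c ≠ ∞) (R : ℝ) :
    volume {t : ℝ | ∃ r, 0 < r ∧ r ≤ R ∧ c * ENNReal.ofReal r ≤ ν (closedBall t r)} ≤
      8 * c⁻¹ * ν univ := by
  set E := {t : ℝ | ∃ r, 0 < r ∧ r ≤ R ∧ c * ENNReal.ofReal r ≤ ν (closedBall t r)}
  choose! ρ hρ₀ hρR hρ using fun t (ht : t ∈ E) ↦ ht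
  obtain ⟨u, huE, hdisj, hcov⟩ :=
    Vitali.exists_disjoint_subfamily_covering_enlargement_closedBall E id ρ R hρR 4
      (by norm_num)
  simp only [id_eq] at hdisj hcov
  have hu : u.Countable := by
    have h := Measure.countable_meas_pos_of_disjoint_iUnion₀ (μ := volume)
      (As := fun b : u ↦ closedBall (b : ℝ) (ρ b))
      (fun _ ↦ measurableSet_closedBall.nullMeasurableSet)
      fun i j hij ↦ (hdisj i.2 j.2 (Subtype.coe_injective.ne hij)).aedisjoint
    have hpos : {b : u | 0 < volume (closedBall (b : ℝ) (ρ b))} = univ :=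
      eq_univ_of_forall fun b ↦ by simp [Real.volume_closedBall, hρ₀ b (huE b.2)]
    rw [hpos, countable_univ_iff] at h
    exact countable_coe_iff.1 h
  have hball (b : ℝ) (hb : b ∈ u) :
      volume (closedBall b (4 * ρ b)) ≤ 8 * c⁻¹ * ν (closedBall b (ρ b)) := by
    have h : ENNReal.ofReal (ρ b) ≤ c⁻¹ * ν (closedBall b (ρ b)) := by
      rw [← ENNReal.div_eq_inv_mul, ENNReal.le_div_iff_mul_le (.inl hc₀) (.inl hc), mul_comm]
      exact hρ b (huE hb)
    calc volume (closedBall b (4 * ρ b)) = 8 * ENNReal.ofReal (ρ b) := by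
          rw [Real.volume_closedBall, ← mul_assoc, ENNReal.ofReal_mul (by norm_num)]
          norm_num
      _ ≤ 8 * c⁻¹ * ν (closedBall b (ρ b)) := by rw [mul_assoc]; gcongr
  calc volume E ≤ volume (⋃ b ∈ u, closedBall b (4 * ρ b)) := measure_mono fun t ht ↦ by
        obtain ⟨b, hb, hsub⟩ := hcov t ht
        exact mem_biUnion hb (hsub (mem_closedBall_self (hρ₀ t ht).le))
    _ ≤ ∑' b : u, volume (closedBall (b : ℝ) (4 * ρ b)) := measure_biUnion_le _ hu _
    _ ≤ ∑' b : u, 8 * c⁻¹ * ν (closedBall (b : ℝ) (ρ b)) :=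
        ENNReal.tsum_le_tsum fun b ↦ hball b b.2
    _ = 8 * c⁻¹ * ν (⋃ b ∈ u, closedBall b (ρ b)) := by
        rw [ENNReal.tsum_mul_left, measure_biUnion hu hdisj fun _ _ ↦ measurableSet_closedBall]
    _ ≤ 8 * c⁻¹ * ν univ := by gcongr; exact subset_univ _

lemma volume_lt_dyadicLeftMaximal_le (G : ℝ → ℝ≥0∞) {c : ℝ≥0∞} (hc₀ : c ≠ 0) (hc : c ≠ ∞) :
    volume {t | c < dyadicLeftMaximal G t} ≤ 8 * c⁻¹ * ∫⁻ s, G s := by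
  set ν := volume.withDensity G
  calc volume {t | c < dyadicLeftMaximal G t}
      ≤ volume {t : ℝ | ∃ r, 0 < r ∧ r ≤ 1 ∧ c * ENNReal.ofReal r ≤ ν (closedBall t r)} := by
        refine measure_mono fun t ht ↦ ?_
        obtain ⟨k, hk⟩ := lt_iSup_iff.1 (show c < dyadicLeftMaximal G t from ht)
        have hk₀ : (0 : ℝ) < 2⁻¹ ^ k := by positivity
        refine ⟨2⁻¹ ^ k, hk₀, pow_le_one₀ (by norm_num) (by norm_num), ?_⟩
        rw [withDensity_apply', ENNReal.ofReal_pow (by norm_num),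
          ENNReal.ofReal_inv_of_pos two_pos, ENNReal.ofReal_ofNat]
        calc c * 2⁻¹ ^ k ≤ (2 ^ k * ∫⁻ s in Icc (t - 2⁻¹ ^ k) t, G s) * 2⁻¹ ^ k := by
              gcongr
          _ = ∫⁻ s in Icc (t - 2⁻¹ ^ k) t, G s := by
              rw [mul_comm, ← mul_assoc, ← mul_pow,
                ENNReal.inv_mul_cancel two_ne_zero ENNReal.ofNat_ne_top, one_pow, one_mul]
          _ ≤ ∫⁻ s in closedBall t (2⁻¹ ^ k), G s := by
              rw [Real.closedBall_eq_Icc]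
              exact lintegral_mono_set (Icc_subset_Icc_right (by linarith))
    _ ≤ 8 * c⁻¹ * ν univ := volume_setOf_mul_le_measure_closedBall_le ν hc₀ hc 1
    _ = 8 * c⁻¹ * ∫⁻ s, G s := by rw [withDensity_apply', Measure.restrict_univ]

lemma enorm_RL_le_mul_dyadicLeftMaximal {α f : ℝ → ℝ} {t : ℝ} (ht : t ∈ Icc (0 : ℝ) 1)
    (hα : 0 < α t) :
    ‖RL α f t‖ₑ ≤ 12 * dyadicLeftMaximal ((Icc (0 : ℝ) 1).indicator fun s ↦ ‖f s‖ₑ) t := by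
  set G := (Icc (0 : ℝ) 1).indicator fun s ↦ ‖f s‖ₑ
  have hG (s : ℝ) (hs : s ∈ Icc (0 : ℝ) 1) : G s = ‖f s‖ₑ := indicator_of_mem hs _
  have hint : ‖∫ s in Ioc 0 t, (t - s) ^ (α t - 1) * f s‖ₑ ≤
      ∫⁻ s in Ico (t - 1) t, ENNReal.ofReal ((t - s) ^ (α t - 1)) * G s :=
    calc _ ≤ ∫⁻ s in Ioc 0 t, ‖(t - s) ^ (α t - 1) * f s‖ₑ := enorm_integral_le_lintegral_enorm _
      _ = ∫⁻ s in Ioc 0 t, ENNReal.ofReal ((t - s) ^ (α t - 1)) * G s :=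
          setLIntegral_congr_fun measurableSet_Ioc fun s hs ↦ by
            rw [enorm_mul, Real.enorm_of_nonneg (rpow_nonneg (by linarith [hs.2]) _),
              hG s ⟨hs.1.le, hs.2.trans ht.2⟩]
      _ = ∫⁻ s in Ico 0 t, ENNReal.ofReal ((t - s) ^ (α t - 1)) * G s :=
          setLIntegral_congr Ico_ae_eq_Ioc.symm
      _ ≤ _ := lintegral_mono_set (Ico_subset_Ico_left (by linarith [ht.2]))
  calc ‖RL α f t‖ₑ = ENNReal.ofReal (1 / Gamma (α t)) *
        ‖∫ s in Ioc 0 t, (t - s) ^ (α t - 1) * f s‖ₑ := by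
        rw [RL, enorm_mul, Real.enorm_of_nonneg (one_div_nonneg.2 (Gamma_pos_of_pos hα).le)]
    _ ≤ _ := by gcongr
    _ ≤ _ := ofReal_one_div_Gamma_mul_setLIntegral_rpow_mul_le hα G t

lemma setOf_le_abs_RL_subset {α f : ℝ → ℝ} {u : ℝ} (hu : 0 < u) :
    {t ∈ Icc (0 : ℝ) 1 | u ≤ |RL α f t|} ⊆ {t | ¬ 0 < α t} ∩ Icc (0 : ℝ) 1 ∪
      {t | ENNReal.ofReal u / 24 <
        dyadicLeftMaximal ((Icc (0 : ℝ) 1).indicator fun s ↦ ‖f s‖ₑ) t} := by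
  rintro t ⟨ht, hut⟩
  by_cases hαt : 0 < α t
  · right
    have h := enorm_RL_le_mul_dyadicLeftMaximal (f := f) ht hαt
    rw [enorm_eq_ofReal_abs] at h
    -- the threshold is halved to get a strict inequality
    exact (ENNReal.div_lt_div_left (ENNReal.ofReal_pos.2 hu).ne' ENNReal.ofReal_ne_top
      (by norm_num)).trans_le (ENNReal.div_le_of_le_mul' ((ENNReal.ofReal_le_ofReal hut).trans h))
  · exact Or.inl ⟨hαt, ht⟩

/-- **Proposition (weak type (1,1) bound, uniform in `α`).**
There is a universal constant `c > 0` such that for every measurable a.e. positive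
`α : [0,1] → ℝ`, every `f ∈ L_1[0,1]` and every `u > 0`,
`|{t ∈ [0,1] : |(R^{α(·)}f)(t)| ≥ u}| ≤ c ‖f‖_1 / u`; i.e. `R^{α(·)}` is bounded from
`L_1[0,1]` into the weak space `L_{1,∞}[0,1]` with a bound independent of `α`. -/
theorem stmt_2 :
    ∃ c : ℝ, 0 < c ∧
      ∀ α : ℝ → ℝ, Measurable α →
        (∀ᵐ t ∂(volume.restrict (Set.Icc (0 : ℝ) 1)), 0 < α t) →
        ∀ f : ℝ → ℝ, MemLp f 1 (volume.restrict (Set.Icc (0 : ℝ) 1)) →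
          ∀ u : ℝ, 0 < u →
            volume {t ∈ Set.Icc (0 : ℝ) 1 | u ≤ |RL α f t|} ≤
              ENNReal.ofReal c * eLpNorm f 1 (volume.restrict (Set.Icc (0 : ℝ) 1)) /
                ENNReal.ofReal u := by
  refine ⟨8 * 24, by norm_num, fun α _ hα f _ u hu ↦ ?_⟩
  have hN : volume ({t | ¬ 0 < α t} ∩ Icc (0 : ℝ) 1) = 0 := by
    rwa [ae_iff, Measure.restrict_apply' measurableSet_Icc] at hα
  have hG : ∫⁻ s, (Icc (0 : ℝ) 1).indicator (fun s ↦ ‖f s‖ₑ) s =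
      eLpNorm f 1 (volume.restrict (Icc (0 : ℝ) 1)) := by
    rw [eLpNorm_one_eq_lintegral_enorm, lintegral_indicator measurableSet_Icc]
  calc _ ≤ _ := (measure_mono (setOf_le_abs_RL_subset hu)).trans (measure_union_le _ _)
    _ ≤ 8 * (ENNReal.ofReal u / 24)⁻¹ * eLpNorm f 1 (volume.restrict (Icc (0 : ℝ) 1)) := by
        rw [hN, zero_add, ← hG]
        exact volume_lt_dyadicLeftMaximal_le _ (by simpa using hu)
          (ENNReal.div_ne_top ENNReal.ofReal_ne_top (by norm_num))
    _ = _ := by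
        rw [ENNReal.inv_div (by simp) (by simp), ENNReal.ofReal_mul (by norm_num),
          ENNReal.ofReal_ofNat, ENNReal.ofReal_ofNat]
        simp only [div_eq_mul_inv]
        ring
end

section
/- The operator R^{α(·)} is bounded from L_1[0,1] to L_1[0,1] if and only if M := sup_{0≤s≤1} ∫_s^1 (1/Γ(α(t))) (t−s)^{α(t)−1} dt < ∞. Moreover, in this case the operator norm ‖R^{α(·)} : L_1[0,1] → L_1[0,1]‖ equals M. -/
/-!
Write `g(s) = ∫ₛ¹ Γ(α t)⁻¹ (t - s)^(α t - 1) dt`, so that `M = sup_{[0,1]} g`. Bounding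
`|R f|` by `R |f|` and applying Tonelli gives `‖R f‖₁ ≤ ∫₀¹ |f(s)| g(s) ds ≤ M ‖f‖₁`, with
equality in the first step for indicators. So a bound `C` gives `∫_A g ≤ C |A|` for every
`A ⊆ (0,1]`, i.e. `g ≤ C` almost everywhere. By Fatou's lemma `g` is lower semicontinuous from
the right, which turns this into `g ≤ C` on all of `[0,1]`, i.e. `M ≤ C`.
-/

open MeasureTheory Real Set Filter
open scoped ENNReal NNReal

/-- `M = sup_{0≤s≤1} ∫_s^1 (1/Γ(α(t))) (t−s)^{α(t)−1} dt` (valued in `ℝ≥0∞`). -/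
noncomputable def Msup (α : ℝ → ℝ) : ℝ≥0∞ :=
  ⨆ s ∈ Set.Icc (0 : ℝ) 1,
    ∫⁻ t in Set.Ioc s 1, ENNReal.ofReal ((1 / Real.Gamma (α t)) * (t - s) ^ (α t - 1))

open scoped Topology

@[fun_prop]
lemma measurable_Gamma : Measurable Real.Gamma :=
  measurable_of_tendsto_metrizable (f := fun n s => Real.GammaSeq s n)
    (fun n => by unfold Real.GammaSeq; fun_prop)
    (tendsto_pi_nhds.2 Real.GammaSeq_tendsto_Gamma)

lemma integrableOn_Ioc_sub_rpow {a t β : ℝ} (hat : a ≤ t) (hβ : -1 < β) :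
    IntegrableOn (fun s => (t - s) ^ β) (Ioc a t) := by
  have h := (intervalIntegral.intervalIntegrable_rpow' hβ (a := 0) (b := t - a)).comp_sub_left t
  rw [sub_zero, sub_sub_cancel] at h
  exact (intervalIntegrable_iff_integrableOn_Ioc_of_le hat).1 h.symm

lemma le_of_lowerSemicontinuousWithinAt_Ioi_of_ae_le {β : Type*} [LinearOrder β] {f : ℝ → β}
    {s b : ℝ} {C : β} (hsb : s < b)
    (hf : LowerSemicontinuousWithinAt f (Ioi s) s)
    (hC : ∀ᵐ u ∂volume.restrict (Ioo s b), f u ≤ C) : f s ≤ C := by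
  by_contra! hlt
  obtain ⟨c, hc, hsub⟩ := mem_nhdsGT_iff_exists_Ioo_subset.1 (hf C hlt)
  have hnull : volume (Ioo s (min c b)) = 0 := by
    rw [ae_restrict_iff' measurableSet_Ioo, ae_iff] at hC
    refine measure_mono_null (fun u hu => ?_) hC
    exact fun h => (h ⟨hu.1, hu.2.trans_le (min_le_right _ _)⟩).not_gt
      (hsub ⟨hu.1, hu.2.trans_le (min_le_left _ _)⟩)
  rw [Real.volume_Ioo, ENNReal.ofReal_eq_zero] at hnull
  linarith [lt_min (mem_Ioi.1 hc) hsb]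

lemma lintegral_Ioc_lintegral_Ioc_swap (a b : ℝ) {H : ℝ → ℝ → ℝ≥0∞}
    (hH : Measurable (Function.uncurry H)) :
    ∫⁻ t in Ioc a b, ∫⁻ s in Ioc a t, H t s = ∫⁻ s in Ioc a b, ∫⁻ t in Icc s b, H t s := by
  set T : Set (ℝ × ℝ) := {p | a < p.2 ∧ p.2 ≤ p.1 ∧ p.1 ≤ b}
  have hT : MeasurableSet T :=
    (measurableSet_lt measurable_const measurable_snd).inter
      ((measurableSet_le measurable_snd measurable_fst).inter
        (measurableSet_le measurable_fst measurable_const))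
  calc ∫⁻ t in Ioc a b, ∫⁻ s in Ioc a t, H t s
      = ∫⁻ t, ∫⁻ s, T.indicator (Function.uncurry H) (t, s) := by
        rw [← lintegral_indicator measurableSet_Ioc]
        refine lintegral_congr fun t => ?_
        by_cases ht : t ∈ Ioc a b
        · rw [indicator_of_mem ht, ← lintegral_indicator measurableSet_Ioc]
          congr 1 with s
          simp only [indicator_apply, mem_Ioc, T, mem_ofPred_eq, Function.uncurry_apply_pair]
          grind
        · rw [indicator_of_notMem ht]
          refine ((lintegral_congr fun s => indicator_of_notMem ?_ _).trans lintegral_zero).symm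
          simp only [T, mem_ofPred_eq, mem_Ioc] at ht ⊢
          grind
    _ = ∫⁻ s, ∫⁻ t, T.indicator (Function.uncurry H) (t, s) :=
        lintegral_lintegral_swap (hH.indicator hT).aemeasurable
    _ = _ := by
        rw [← lintegral_indicator measurableSet_Ioc]
        refine lintegral_congr fun s => ?_
        by_cases hs : s ∈ Ioc a b
        · rw [indicator_of_mem hs, ← lintegral_indicator measurableSet_Icc]
          congr 1 with t
          simp only [indicator_apply, mem_Icc, T, mem_ofPred_eq, Function.uncurry_apply_pair]
          grind
        · rw [indicator_of_notMem hs]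
          refine (lintegral_congr fun t => indicator_of_notMem ?_ _).trans lintegral_zero
          simp only [T, mem_ofPred_eq, mem_Ioc] at hs ⊢
          grind

noncomputable def rlKernel (α : ℝ → ℝ) (t s : ℝ) : ℝ≥0∞ :=
  ENNReal.ofReal ((1 / Real.Gamma (α t)) * (t - s) ^ (α t - 1))

-- `Msup α` is definitionally `⨆ s ∈ Icc 0 1, rlColumn α s`.
noncomputable def rlColumn (α : ℝ → ℝ) (s : ℝ) : ℝ≥0∞ :=
  ∫⁻ t in Ioc s 1, rlKernel α t s

def RLBoundedBy (α : ℝ → ℝ) (C : ℝ≥0∞) : Prop :=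
  ∀ f : ℝ → ℝ, MemLp f 1 (volume.restrict (Icc (0 : ℝ) 1)) →
    eLpNorm (RL α f) 1 (volume.restrict (Icc (0 : ℝ) 1)) ≤
      C * eLpNorm f 1 (volume.restrict (Icc (0 : ℝ) 1))

variable {α : ℝ → ℝ}

lemma RLBoundedBy.mono {C D : ℝ≥0∞} (h : RLBoundedBy α C) (hCD : C ≤ D) :
    RLBoundedBy α D :=
  fun f hf => (h f hf).trans (mul_le_mul_left hCD _)

lemma measurable_rlKernel (hα : Measurable α) : Measurable (Function.uncurry (rlKernel α)) := by
  unfold rlKernel Function.uncurry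
  fun_prop

lemma measurable_rlKernel_left (hα : Measurable α) (s : ℝ) :
    Measurable fun t => rlKernel α t s :=
  (measurable_rlKernel hα).comp (measurable_id.prodMk measurable_const)

lemma measurable_rlColumn (hα : Measurable α) : Measurable (rlColumn α) := by
  have h : rlColumn α = fun s => ∫⁻ t, {p : ℝ × ℝ | p.1 < p.2 ∧ p.2 ≤ 1}.indicator
      (fun p => rlKernel α p.2 p.1) (s, t) := by
    funext s
    rw [rlColumn, ← lintegral_indicator measurableSet_Ioc]
    rfl
  rw [h]
  refine Measurable.lintegral_prod_right' (Measurable.indicator ?_ ?_)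
  · exact (measurable_rlKernel hα).comp measurable_swap
  · exact (measurableSet_lt measurable_fst measurable_snd).inter
      (measurableSet_le measurable_snd measurable_const)

lemma lintegral_rlKernel_mul_eq (hα : Measurable α) {F : ℝ → ℝ≥0∞} (hF : Measurable F) :
    ∫⁻ t in Icc (0 : ℝ) 1, ∫⁻ s in Ioc 0 t, rlKernel α t s * F s
      = ∫⁻ s in Ioc (0 : ℝ) 1, rlColumn α s * F s := by
  rw [setLIntegral_congr Ioc_ae_eq_Icc.symm,
    lintegral_Ioc_lintegral_Ioc_swap (H := fun t s => rlKernel α t s * F s) 0 1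
      ((measurable_rlKernel hα).mul (hF.comp measurable_snd))]
  refine setLIntegral_congr_fun measurableSet_Ioc fun s _ => ?_
  rw [rlColumn, setLIntegral_congr Ioc_ae_eq_Icc.symm,
    lintegral_mul_const _ (measurable_rlKernel_left hα s)]

lemma RL_eq_integral (f : ℝ → ℝ) (t : ℝ) :
    RL α f t = ∫ s in Ioc 0 t, 1 / Real.Gamma (α t) * ((t - s) ^ (α t - 1) * f s) :=
  (integral_const_mul _ _).symm

lemma enorm_rlIntegrand {t s : ℝ} (ht : 0 < α t) (hst : s ≤ t) (x : ℝ) :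
    ‖1 / Real.Gamma (α t) * ((t - s) ^ (α t - 1) * x)‖ₑ = rlKernel α t s * ‖x‖ₑ := by
  have hK : 0 ≤ 1 / Real.Gamma (α t) * (t - s) ^ (α t - 1) :=
    mul_nonneg (one_div_nonneg.2 (Real.Gamma_pos_of_pos ht).le)
      (Real.rpow_nonneg (sub_nonneg.2 hst) _)
  rw [← mul_assoc, enorm_mul, Real.enorm_eq_ofReal hK, rlKernel]

lemma enorm_RL_le (f : ℝ → ℝ) {t : ℝ} (ht : 0 < α t) :
    ‖RL α f t‖ₑ ≤ ∫⁻ s in Ioc 0 t, rlKernel α t s * ‖f s‖ₑ := by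
  rw [RL_eq_integral]
  exact (enorm_integral_le_lintegral_enorm _).trans_eq
    (setLIntegral_congr_fun measurableSet_Ioc fun s hs => enorm_rlIntegrand ht hs.2 _)

lemma enorm_RL_eq_of_nonneg {f : ℝ → ℝ} {t : ℝ} (ht : 0 < α t) (hf : 0 ≤ f)
    (hint : IntegrableOn (fun s => (t - s) ^ (α t - 1) * f s) (Ioc 0 t)) :
    ‖RL α f t‖ₑ = ∫⁻ s in Ioc 0 t, rlKernel α t s * ‖f s‖ₑ := by
  have hnonneg : ∀ s ∈ Ioc 0 t, 0 ≤ 1 / Real.Gamma (α t) * ((t - s) ^ (α t - 1) * f s) :=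
    fun s hs => mul_nonneg (one_div_nonneg.2 (Real.Gamma_pos_of_pos ht).le)
      (mul_nonneg (Real.rpow_nonneg (sub_nonneg.2 hs.2) _) (hf s))
  have hnonneg_ae : 0 ≤ᵐ[volume.restrict (Ioc 0 t)]
      fun s => 1 / Real.Gamma (α t) * ((t - s) ^ (α t - 1) * f s) :=
    ae_restrict_of_forall_mem measurableSet_Ioc hnonneg
  rw [RL_eq_integral, Real.enorm_eq_ofReal (integral_nonneg_of_ae hnonneg_ae),
    ofReal_integral_eq_lintegral_ofReal (hint.const_mul _) hnonneg_ae]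
  refine setLIntegral_congr_fun measurableSet_Ioc fun s hs => ?_
  rw [← enorm_rlIntegrand ht hs.2, Real.enorm_eq_ofReal (hnonneg s hs)]

lemma rlBoundedBy_Msup (hα : Measurable α)
    (hpos : ∀ᵐ t ∂(volume.restrict (Icc (0 : ℝ) 1)), 0 < α t) : RLBoundedBy α (Msup α) := by
  intro f hf
  set F := hf.1.enorm.mk
  have hF : Measurable F := hf.1.enorm.measurable_mk
  have hfF : (fun s => ‖f s‖ₑ) =ᵐ[volume.restrict (Icc 0 1)] F := hf.1.enorm.ae_eq_mk
  rw [eLpNorm_one_eq_lintegral_enorm, eLpNorm_one_eq_lintegral_enorm, lintegral_congr_ae hfF]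
  calc ∫⁻ t in Icc 0 1, ‖RL α f t‖ₑ
      ≤ ∫⁻ t in Icc 0 1, ∫⁻ s in Ioc 0 t, rlKernel α t s * F s := by
        refine lintegral_mono_ae ?_
        filter_upwards [hpos, ae_restrict_mem measurableSet_Icc] with t ht htI
        refine (enorm_RL_le f ht).trans_eq (lintegral_congr_ae ?_)
        filter_upwards [ae_restrict_of_ae_restrict_of_subset
          (Ioc_subset_Icc_self.trans (Icc_subset_Icc le_rfl htI.2)) hfF] with s hs
        rw [hs]
    _ = ∫⁻ s in Ioc 0 1, rlColumn α s * F s := lintegral_rlKernel_mul_eq hα hF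
    _ ≤ ∫⁻ s in Ioc 0 1, Msup α * F s :=
        setLIntegral_mono' measurableSet_Ioc fun s hs =>
          mul_le_mul_left (le_biSup (rlColumn α) (Ioc_subset_Icc_self hs)) _
    _ = Msup α * ∫⁻ s in Icc 0 1, F s := by
        rw [lintegral_const_mul _ hF, setLIntegral_congr Ioc_ae_eq_Icc]

lemma eLpNorm_RL_indicator (hα : Measurable α)
    (hpos : ∀ᵐ t ∂(volume.restrict (Icc (0 : ℝ) 1)), 0 < α t)
    {A : Set ℝ} (hA : MeasurableSet A) (hA1 : A ⊆ Ioc 0 1) :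
    eLpNorm (RL α (A.indicator 1)) 1 (volume.restrict (Icc (0 : ℝ) 1))
      = ∫⁻ s in A, rlColumn α s := by
  rw [eLpNorm_one_eq_lintegral_enorm]
  calc ∫⁻ t in Icc 0 1, ‖RL α (A.indicator 1) t‖ₑ
      = ∫⁻ t in Icc 0 1, ∫⁻ s in Ioc 0 t, rlKernel α t s * ‖A.indicator (1 : ℝ → ℝ) s‖ₑ := by
        refine lintegral_congr_ae ?_
        filter_upwards [hpos, ae_restrict_mem measurableSet_Icc] with t ht htI
        refine enorm_RL_eq_of_nonneg ht (indicator_nonneg (fun _ _ => zero_le_one)) ?_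
        refine (integrableOn_Ioc_sub_rpow htI.1 (by linarith)).mul_bdd (c := 1)
          (measurable_one.indicator hA).aestronglyMeasurable (ae_of_all _ fun s => ?_)
        exact (norm_indicator_le_norm_self _ s).trans norm_one.le
    _ = ∫⁻ s in Ioc 0 1, rlColumn α s * ‖A.indicator (1 : ℝ → ℝ) s‖ₑ :=
        lintegral_rlKernel_mul_eq hα (measurable_one.indicator hA).enorm
    _ = ∫⁻ s in A, rlColumn α s := by
        simp_rw [enorm_indicator_eq_indicator_enorm, Pi.one_apply, enorm_one,
          ← indicator_mul_right, mul_one]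
        rw [lintegral_indicator hA, Measure.restrict_restrict hA, inter_eq_left.2 hA1]

lemma ae_rlColumn_le (hα : Measurable α)
    (hpos : ∀ᵐ t ∂(volume.restrict (Icc (0 : ℝ) 1)), 0 < α t) {C : ℝ≥0∞}
    (hC : RLBoundedBy α C) : ∀ᵐ s ∂volume.restrict (Ioc 0 1), rlColumn α s ≤ C := by
  refine ae_le_of_forall_setLIntegral_le_of_sigmaFinite (measurable_rlColumn hα) fun B hB _ => ?_
  have hA := hB.inter (measurableSet_Ioc (a := (0 : ℝ)) (b := 1))
  rw [Measure.restrict_restrict hB, setLIntegral_const,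
    ← eLpNorm_RL_indicator hα hpos hA inter_subset_right]
  refine (hC _ (memLp_indicator_const 1 hA 1 (Or.inr (measure_ne_top _ _)))).trans_eq ?_
  rw [eLpNorm_indicator_const hA one_ne_zero ENNReal.one_ne_top, Measure.restrict_apply hA,
    inter_eq_left.2 (inter_subset_right.trans Ioc_subset_Icc_self)]
  simp

lemma lowerSemicontinuousWithinAt_rlColumn (hα : Measurable α) (s : ℝ) :
    LowerSemicontinuousWithinAt (rlColumn α) (Ioi s) s := by
  rw [lowerSemicontinuousWithinAt_iff_le_liminf]
  set G : ℝ → ℝ → ℝ≥0∞ := fun u => (Ioc u 1).indicator fun t => rlKernel α t u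
  have hG : rlColumn α = fun u => ∫⁻ t, G u t :=
    funext fun u => (lintegral_indicator measurableSet_Ioc _).symm
  have hlim : ∀ t, G s t ≤ liminf (fun u => G u t) (𝓝[>] s) := by
    intro t
    by_cases ht : t ∈ Ioc s 1
    · have hcont : ContinuousAt (fun u => rlKernel α t u) s := by
        refine ENNReal.continuous_ofReal.continuousAt.comp ?_
        fun_prop (disch := exact Or.inl (sub_pos.2 ht.1).ne')
      have hev : (fun u => rlKernel α t u) =ᶠ[𝓝[>] s] fun u => G u t := by
        filter_upwards [nhdsWithin_le_nhds (eventually_lt_nhds ht.1)] with u hu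
        exact (indicator_of_mem (show t ∈ Ioc u 1 from ⟨hu, ht.2⟩) (rlKernel α · u)).symm
      rw [((hcont.tendsto.mono_left nhdsWithin_le_nhds).congr' hev).liminf_eq]
      exact (indicator_of_mem ht _).le
    · simp [G, indicator_of_notMem ht]
  rw [hG]
  exact (lintegral_mono hlim).trans
    (lintegral_liminf_le fun u => (measurable_rlKernel_left hα u).indicator measurableSet_Ioc)

lemma Msup_le_of_rlBoundedBy (hα : Measurable α)
    (hpos : ∀ᵐ t ∂(volume.restrict (Icc (0 : ℝ) 1)), 0 < α t) {C : ℝ≥0∞}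
    (hC : RLBoundedBy α C) : Msup α ≤ C := by
  refine iSup₂_le fun s hs => ?_
  rcases hs.2.lt_or_eq with hs1 | rfl
  · exact le_of_lowerSemicontinuousWithinAt_Ioi_of_ae_le hs1
      (lowerSemicontinuousWithinAt_rlColumn hα s)
      (ae_restrict_of_ae_restrict_of_subset (Ioo_subset_Ioc_self.trans
        (Ioc_subset_Ioc_left hs.1)) (ae_rlColumn_le hα hpos hC))
  · simp

/-- **Proposition (boundedness in `L_1[0,1]`).**
`R^{α(·)}` is bounded on `L_1[0,1]` iff
`M := sup_{0≤s≤1} ∫_s^1 (1/Γ(α(t))) (t−s)^{α(t)−1} dt < ∞`, and in this case the operator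
norm equals `M` (i.e. `M` is a bound and every bound dominates `M`). -/
theorem stmt_3 (α : ℝ → ℝ) (hα : Measurable α)
    (hpos : ∀ᵐ t ∂(volume.restrict (Set.Icc (0 : ℝ) 1)), 0 < α t) :
    ((∃ C : ℝ, 0 < C ∧
        ∀ f : ℝ → ℝ, MemLp f 1 (volume.restrict (Set.Icc (0 : ℝ) 1)) →
          eLpNorm (RL α f) 1 (volume.restrict (Set.Icc (0 : ℝ) 1)) ≤
            ENNReal.ofReal C * eLpNorm f 1 (volume.restrict (Set.Icc (0 : ℝ) 1))) ↔
      Msup α < ⊤) ∧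
    (Msup α < ⊤ →
      ((∀ f : ℝ → ℝ, MemLp f 1 (volume.restrict (Set.Icc (0 : ℝ) 1)) →
          eLpNorm (RL α f) 1 (volume.restrict (Set.Icc (0 : ℝ) 1)) ≤
            Msup α * eLpNorm f 1 (volume.restrict (Set.Icc (0 : ℝ) 1))) ∧
        (∀ C : ℝ≥0∞,
          (∀ f : ℝ → ℝ, MemLp f 1 (volume.restrict (Set.Icc (0 : ℝ) 1)) →
            eLpNorm (RL α f) 1 (volume.restrict (Set.Icc (0 : ℝ) 1)) ≤
              C * eLpNorm f 1 (volume.restrict (Set.Icc (0 : ℝ) 1))) →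
          Msup α ≤ C))) := by
  have lower : ∀ C, RLBoundedBy α C → Msup α ≤ C := fun _ => Msup_le_of_rlBoundedBy hα hpos
  refine ⟨⟨fun ⟨C, _, hC⟩ => (lower _ hC).trans_lt ENNReal.ofReal_lt_top, fun hM => ?_⟩,
    fun _ => ⟨rlBoundedBy_Msup hα hpos, lower⟩⟩
  refine ⟨(Msup α).toReal + 1, by positivity, (rlBoundedBy_Msup hα hpos).mono ?_⟩
  rw [ENNReal.le_ofReal_iff_toReal_le hM.ne (by positivity)]
  linarith
end

section
/- Define α : [0,1] → ℝ by α(t) = 1/|ln t| for 0 < t ≤ e^{−1} and α(t) = 1 for e^{−1} ≤ t ≤ 1 (with an arbitrary positive value at t = 0). Then R^{α(·)} is NOT a bounded operator from L_1[0,1] to L_1[0,1]: there is no constant C > 0 with ‖R^{α(·)} f‖_1 ≤ C ‖f‖_1 for all f ∈ L_1[0,1]. -/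
/-!
Test the operator on `f_a = a⁻¹ 𝟙_(0,a]`, which has `‖f_a‖₁ = 1`. For `a < t ≤ e⁻¹` the order
`α(t) = 1/|ln t|` lies in `(0,1]`, so the kernel satisfies `(t - s)^(α(t)-1) ≥ t^(α(t)-1) = e⁻¹/t`
on `(0,a]`, and `1/Γ(α) ≥ α` by convexity of `Γ`. Hence `R^{α(·)} f_a(t) ≥ e⁻¹/(t |ln t|)`,
whose integral over `(a, e⁻¹)` is `e⁻¹ ln |ln a| → ∞` as `a → 0`.
-/

open MeasureTheory Real Set Filter
open scoped ENNReal NNReal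

open Topology

namespace Real

theorem Gamma_le_inv {x : ℝ} (hx₀ : 0 < x) (hx₁ : x ≤ 1) : Gamma x ≤ x⁻¹ := by
  have hGamma_succ : Gamma (x + 1) ≤ 1 := by
    have := convexOn_Gamma.le_on_segment (x := 1) (y := 2) (z := x + 1) (by norm_num)
      (by norm_num) (by rw [segment_eq_Icc (by norm_num)]; constructor <;> linarith)
    simpa [Gamma_two] using this
  rw [Gamma_add_one hx₀.ne'] at hGamma_succ
  rwa [← mul_one x⁻¹, le_inv_mul_iff₀ hx₀]

theorem rpow_inv_neg_log {t : ℝ} (ht₀ : 0 < t) (ht₁ : t ≠ 1) : t ^ (-log t)⁻¹ = exp (-1) := by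
  rw [inv_neg, rpow_neg ht₀.le, rpow_inv_log ht₀ ht₁, exp_neg]

theorem hasDerivAt_neg_log_neg_log {t : ℝ} (ht₀ : 0 < t) (ht₁ : t ≠ 1) :
    HasDerivAt (fun u => -log (-log u)) (t * -log t)⁻¹ t := by
  have hlog : -log t ≠ 0 := neg_ne_zero.2 (log_ne_zero_of_pos_of_ne_one ht₀ ht₁)
  refine ((hasDerivAt_log hlog).comp t (hasDerivAt_log ht₀.ne').neg).neg.congr_deriv ?_
  field_simp

theorem integral_inv_mul_neg_log {a : ℝ} (ha₀ : 0 < a) (ha : a ≤ exp (-1)) :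
    ∫ t in Ioc a (exp (-1)), (t * -log t)⁻¹ = log (-log a) := by
  have hlt : exp (-1) < 1 := exp_lt_one_iff.2 (by norm_num)
  have hderiv : ∀ t ∈ uIcc a (exp (-1)), HasDerivAt (fun u => -log (-log u)) (t * -log t)⁻¹ t := by
    intro t ht
    rw [uIcc_of_le ha] at ht
    exact hasDerivAt_neg_log_neg_log (ha₀.trans_le ht.1) (ht.2.trans_lt hlt).ne
  rw [← intervalIntegral.integral_of_le ha, intervalIntegral.integral_eq_sub_of_hasDerivAt hderiv]
  · simp
  · refine ContinuousOn.intervalIntegrable fun t ht => ?_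
    rw [uIcc_of_le ha] at ht
    have ht₀ : 0 < t := ha₀.trans_le ht.1
    have hlog : log t < 0 := log_neg ht₀ (ht.2.trans_lt hlt)
    exact ((continuousAt_id.mul (continuousAt_log ht₀.ne').neg).inv₀
      (mul_pos ht₀ (neg_pos.2 hlog)).ne').continuousWithinAt

end Real

theorem mul_rpow_sub_one_le_RL_indicator {α : ℝ → ℝ} {a t : ℝ} (ha : 0 < a) (hat : a < t)
    (hα₀ : 0 < α t) (hα₁ : α t ≤ 1) :
    α t * t ^ (α t - 1) ≤ RL α ((Ioc 0 a).indicator fun _ => a⁻¹) t := by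
  have hβ : α t - 1 ≤ 0 := by linarith
  have hrestrict : ∫ s in Ioc 0 t, (t - s) ^ (α t - 1) * (Ioc 0 a).indicator (fun _ => a⁻¹) s =
      ∫ s in Ioc 0 a, (t - s) ^ (α t - 1) * a⁻¹ := by
    simp_rw [← indicator_mul_right (Ioc 0 a) (fun s => (t - s) ^ (α t - 1))]
    rw [setIntegral_indicator measurableSet_Ioc, Ioc_inter_Ioc, max_self, min_eq_right hat.le]
  have hintegrable : IntegrableOn (fun s => (t - s) ^ (α t - 1) * a⁻¹) (Ioc 0 a) := by
    refine (ContinuousOn.integrableOn_Icc fun s hs => ?_).mono_set Ioc_subset_Icc_self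
    exact (((continuousAt_const.sub continuousAt_id).rpow_const
      (Or.inl (sub_pos.2 (hs.2.trans_lt hat)).ne')).mul continuousAt_const).continuousWithinAt
  have hkernel : t ^ (α t - 1) ≤ ∫ s in Ioc 0 a, (t - s) ^ (α t - 1) * a⁻¹ :=
    calc t ^ (α t - 1) = ∫ _ in Ioc 0 a, t ^ (α t - 1) * a⁻¹ := by
          rw [setIntegral_const, Real.volume_real_Ioc_of_le ha.le, sub_zero, smul_eq_mul]
          field_simp
      _ ≤ _ := setIntegral_mono_on (integrableOn_const measure_Ioc_lt_top.ne) hintegrable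
          measurableSet_Ioc fun s hs => mul_le_mul_of_nonneg_right
            (rpow_le_rpow_of_nonpos (by linarith [hs.2]) (by linarith [hs.1]) hβ) (by positivity)
  have hGamma : α t ≤ (Gamma (α t))⁻¹ :=
    (le_inv_comm₀ (Gamma_pos_of_pos hα₀) hα₀).1 (Gamma_le_inv hα₀ hα₁)
  calc α t * t ^ (α t - 1) ≤ (Gamma (α t))⁻¹ * t ^ (α t - 1) := by
        gcongr
        exact rpow_nonneg (ha.trans hat).le _
    _ ≤ (Gamma (α t))⁻¹ * ∫ s in Ioc 0 a, (t - s) ^ (α t - 1) * a⁻¹ := by gcongr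
    _ = RL α ((Ioc 0 a).indicator fun _ => a⁻¹) t := by rw [RL, hrestrict, one_div]

theorem exp_neg_one_mul_inv_le_RL_indicator {α : ℝ → ℝ}
    (h1 : ∀ t : ℝ, 0 < t → t ≤ exp (-1) → α t = 1 / |log t|)
    {a t : ℝ} (ha : 0 < a) (hat : a < t) (ht : t ≤ exp (-1)) :
    exp (-1) * (t * -log t)⁻¹ ≤ RL α ((Ioc 0 a).indicator fun _ => a⁻¹) t := by
  have ht₀ : 0 < t := ha.trans hat
  have ht₁ : t < 1 := ht.trans_lt (exp_lt_one_iff.2 (by norm_num))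
  have hlog : 1 ≤ -log t := by
    have := log_le_log ht₀ ht
    rw [log_exp] at this
    linarith
  have hα : α t = (-log t)⁻¹ := by
    rw [h1 t ht₀ ht, abs_of_neg (log_neg ht₀ ht₁), one_div]
  calc exp (-1) * (t * -log t)⁻¹ = α t * t ^ (α t - 1) := by
        rw [hα, rpow_sub_one ht₀.ne', rpow_inv_neg_log ht₀ ht₁.ne]
        field_simp
    _ ≤ _ := mul_rpow_sub_one_le_RL_indicator ha hat (by rw [hα]; positivity)
        (by rw [hα]; exact inv_le_one_of_one_le₀ hlog)

theorem enorm_setIntegral_le_eLpNorm_one {X : Type*} [MeasurableSpace X] {μ : Measure X}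
    {g F : X → ℝ} {s u : Set X} (hs : MeasurableSet s) (hsu : s ⊆ u)
    (hgF : ∀ x ∈ s, ‖g x‖ ≤ ‖F x‖) :
    ‖∫ x in s, g x ∂μ‖ₑ ≤ eLpNorm F 1 (μ.restrict u) :=
  calc ‖∫ x in s, g x ∂μ‖ₑ ≤ ∫⁻ x in s, ‖g x‖ₑ ∂μ := enorm_integral_le_lintegral_enorm _
    _ ≤ ∫⁻ x in s, ‖F x‖ₑ ∂μ := setLIntegral_mono' hs fun x hx => by
        simpa only [enorm_le_iff_norm_le] using hgF x hx
    _ ≤ ∫⁻ x in u, ‖F x‖ₑ ∂μ := lintegral_mono_set hsu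
    _ = eLpNorm F 1 (μ.restrict u) := eLpNorm_one_eq_lintegral_enorm.symm

theorem eLpNorm_indicator_Ioc_inv {a : ℝ} (ha₀ : 0 < a) (ha₁ : a ≤ 1) :
    eLpNorm ((Ioc 0 a).indicator fun _ => a⁻¹) 1 (volume.restrict (Icc 0 1)) = 1 := by
  rw [eLpNorm_indicator_const measurableSet_Ioc one_ne_zero ENNReal.one_ne_top,
    Measure.restrict_apply measurableSet_Ioc,
    inter_eq_left.2 (Ioc_subset_Icc_self.trans (Icc_subset_Icc_right ha₁)), volume_Ioc]
  simp [Real.enorm_eq_ofReal (inv_nonneg.2 ha₀.le), ← ENNReal.ofReal_mul (inv_nonneg.2 ha₀.le),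
    ha₀.ne']

theorem exists_lt_log_neg_log (M : ℝ) : ∃ a, M < log (-log a) ∧ 0 < a ∧ a < exp (-1) := by
  have hlim : Tendsto (fun a => log (-log a)) (𝓝[>] 0) atTop :=
    tendsto_log_atTop.comp (tendsto_neg_atBot_atTop.comp tendsto_log_nhdsGT_zero)
  exact ((hlim.eventually_gt_atTop M).and (Ioo_mem_nhdsGT (exp_pos (-1)))).exists

theorem stmt_4_general (α : ℝ → ℝ)
    (h1 : ∀ t : ℝ, 0 < t → t ≤ Real.exp (-1) → α t = 1 / |Real.log t|) :
    ¬ ∃ C : ℝ, 0 < C ∧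
        ∀ f : ℝ → ℝ, MemLp f 1 (volume.restrict (Set.Icc (0 : ℝ) 1)) →
          eLpNorm (RL α f) 1 (volume.restrict (Set.Icc (0 : ℝ) 1)) ≤
            ENNReal.ofReal C * eLpNorm f 1 (volume.restrict (Set.Icc (0 : ℝ) 1)) := by
  rintro ⟨C, hC, hbounded⟩
  obtain ⟨a, hCa, ha₀, ha⟩ := exists_lt_log_neg_log (exp 1 * C)
  have he : exp (-1) < 1 := exp_lt_one_iff.2 (by norm_num)
  have ha₁ : a ≤ 1 := (ha.trans he).le
  set f := (Ioc 0 a).indicator fun _ => a⁻¹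
  have hlower : ‖∫ t in Ioc a (exp (-1)), exp (-1) * (t * -log t)⁻¹‖ₑ ≤
      eLpNorm (RL α f) 1 (volume.restrict (Icc 0 1)) := by
    refine enorm_setIntegral_le_eLpNorm_one measurableSet_Ioc
      (fun t ht => ⟨(ha₀.trans ht.1).le, ht.2.trans he.le⟩) fun t ht => ?_
    have ht₀ : 0 < t := ha₀.trans ht.1
    have hlog : 0 < -log t := neg_pos.2 (log_neg ht₀ (ht.2.trans_lt he))
    simp only [Real.norm_eq_abs]
    exact abs_le_abs_of_nonneg (by positivity)
      (exp_neg_one_mul_inv_le_RL_indicator h1 ha₀ ht.1 ht.2)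
  rw [integral_const_mul, integral_inv_mul_neg_log ha₀ ha.le] at hlower
  have hupper := hbounded f
    (memLp_indicator_const 1 measurableSet_Ioc _ (Or.inr measure_Ioc_lt_top.ne))
  rw [eLpNorm_indicator_Ioc_inv ha₀ ha₁, mul_one] at hupper
  have hC_lt : C < exp (-1) * log (-log a) := by
    rw [exp_neg, ← div_eq_inv_mul, lt_div_iff₀' (exp_pos 1)]
    exact hCa
  exact (hlower.trans hupper).not_gt
    (((ENNReal.ofReal_lt_ofReal_iff_of_nonneg hC.le).2 hC_lt).trans_le (ofReal_le_enorm _))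

/-- **Proposition (unboundedness in `L_1[0,1]`).**
For `α(t) = 1/|ln t|` on `(0, e⁻¹]`, `α(t) = 1` on `[e⁻¹, 1]` (and an arbitrary
positive value at `t = 0`), the operator `R^{α(·)}` is not bounded on `L_1[0,1]`. -/
theorem stmt_4 (α : ℝ → ℝ)
    (h1 : ∀ t : ℝ, 0 < t → t ≤ Real.exp (-1) → α t = 1 / |Real.log t|)
    (h2 : ∀ t : ℝ, Real.exp (-1) ≤ t → t ≤ 1 → α t = 1)
    (h0 : 0 < α 0) :
    ¬ ∃ C : ℝ, 0 < C ∧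
        ∀ f : ℝ → ℝ, MemLp f 1 (volume.restrict (Set.Icc (0 : ℝ) 1)) →
          eLpNorm (RL α f) 1 (volume.restrict (Set.Icc (0 : ℝ) 1)) ≤
            ENNReal.ofReal C * eLpNorm f 1 (volume.restrict (Set.Icc (0 : ℝ) 1)) :=
  stmt_4_general α h1
end

section
/- Let 1 ≤ p ≤ ∞, r > 0, and let α : [0,r] → ℝ be measurable with α(t) > 0 a.e. Define J_p : L_p[0,1] → L_p[0,r] by (J_p f)(s) := r^{−1/p} f(s/r) for 0 ≤ s ≤ r (with r^{−1/p} = 1 when p = ∞), and set α̃(t) := α(rt) for 0 ≤ t ≤ 1. Then for every f ∈ L_p[0,1] and almost every t ∈ [0,r]: (R^{α(·)}(J_p f))(t) = r^{α(t) − 1/p} · (R^{α̃(·)} f)(t/r). Equivalently, for any 1 ≤ q ≤ ∞, J_q^{−1} ∘ R^{α(·)} ∘ J_p = M_{α,r} ∘ R^{α̃(·)} as operators from L_p[0,1] to L_q[0,1], where (M_{α,r} g)(t) := r^{α̃(t)+1/q−1/p} g(t). -/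
open MeasureTheory Real Set Filter
open scoped ENNReal NNReal

/-!
The identity holds for every `t ≥ 0`: substituting `s = r u` in the Riemann–Liouville integral
turns `(t - s)^{α(t)-1} ds` into `r^{α(t)-1} (t/r - u)^{α(t)-1} · r du`, so dilating the argument
by `r` multiplies `R^{α(·)}` by `r^{α(t)}`; the normalising factor `r^{-1/p}` of `J_p` just
passes through the linear operator.
-/

theorem RL_const_mul (α f : ℝ → ℝ) (k t : ℝ) :
    RL α (fun s => k * f s) t = k * RL α f t := by
  simp only [RL, mul_left_comm _ k, integral_const_mul]

theorem rpow_sub_eq_mul_rpow_div_sub {r t u : ℝ} (hr : 0 < r) (hu : u ≤ t / r) (a : ℝ) :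
    (t - r * u) ^ a = r ^ a * (t / r - u) ^ a := by
  rw [← mul_rpow hr.le (sub_nonneg.mpr hu), mul_sub, mul_div_cancel₀ t hr.ne']

theorem integral_Ioc_rpow_sub_mul_comp_div {r t : ℝ} (hr : 0 < r) (ht : 0 ≤ t) (a : ℝ)
    (f : ℝ → ℝ) :
    ∫ s in Ioc 0 t, (t - s) ^ (a - 1) * f (s / r) =
      r ^ a * ∫ u in Ioc 0 (t / r), (t / r - u) ^ (a - 1) * f u := by
  rw [← intervalIntegral.integral_of_le ht,
    ← intervalIntegral.integral_of_le (div_nonneg ht hr.le)]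
  calc ∫ s in (0 : ℝ)..t, (t - s) ^ (a - 1) * f (s / r)
      = ∫ s in (0 : ℝ)..t, r ^ (a - 1) * ((t / r - s / r) ^ (a - 1) * f (s / r)) := by
        refine intervalIntegral.integral_congr fun s hs => ?_
        rw [uIcc_of_le ht] at hs
        have hsr : s / r ≤ t / r := div_le_div_of_nonneg_right hs.2 hr.le
        rw [← mul_assoc, ← rpow_sub_eq_mul_rpow_div_sub hr hsr, mul_div_cancel₀ s hr.ne']
    _ = r * (r ^ (a - 1) * ∫ u in (0 : ℝ)..t / r, (t / r - u) ^ (a - 1) * f u) := by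
        rw [intervalIntegral.integral_comp_div
            (fun u => r ^ (a - 1) * ((t / r - u) ^ (a - 1) * f u)) hr.ne',
          zero_div, smul_eq_mul, intervalIntegral.integral_const_mul]
    _ = r ^ a * ∫ u in (0 : ℝ)..t / r, (t / r - u) ^ (a - 1) * f u := by
        rw [rpow_sub_one hr.ne']
        field_simp

theorem RL_comp_div {r t : ℝ} (hr : 0 < r) (ht : 0 ≤ t) (α f : ℝ → ℝ) :
    RL α (fun s => f (s / r)) t = r ^ α t * RL (fun u => α (r * u)) f (t / r) := by
  simp only [RL, mul_div_cancel₀ t hr.ne', integral_Ioc_rpow_sub_mul_comp_div hr ht]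
  ring

theorem stmt_8_general (p : ℝ≥0∞) (r : ℝ) (hr : 0 < r)
    (α : ℝ → ℝ)
    (f : ℝ → ℝ) :
    ∀ᵐ t ∂(volume.restrict (Set.Icc (0 : ℝ) r)),
      RL α (fun s => r ^ (-(1 / p.toReal)) * f (s / r)) t =
        r ^ (α t - 1 / p.toReal) * RL (fun u => α (r * u)) f (t / r) := by
  filter_upwards [self_mem_ae_restrict measurableSet_Icc] with t ht
  rw [RL_const_mul, RL_comp_div hr ht.1, ← mul_assoc, ← rpow_add hr]
  ring_nf

/-- **Proposition (scaling property).**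
For `1 ≤ p ≤ ∞`, `r > 0` and `α : [0,r] → ℝ` measurable and a.e. positive, with
`(J_p f)(s) = r^{−1/p} f(s/r)` and `α̃(t) = α(rt)`, for every `f ∈ L_p[0,1]` and almost
every `t ∈ [0,r]` one has `(R^{α(·)}(J_p f))(t) = r^{α(t)−1/p} (R^{α̃(·)}f)(t/r)`
(with `1/p = 0` for `p = ∞`, realized by `p.toReal⁻¹`). -/
theorem stmt_8 (p : ℝ≥0∞) (hp : 1 ≤ p) (r : ℝ) (hr : 0 < r)
    (α : ℝ → ℝ) (hα : Measurable α)
    (hpos : ∀ᵐ t ∂(volume.restrict (Set.Icc (0 : ℝ) r)), 0 < α t)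
    (f : ℝ → ℝ) (hf : MemLp f p (volume.restrict (Set.Icc (0 : ℝ) 1))) :
    ∀ᵐ t ∂(volume.restrict (Set.Icc (0 : ℝ) r)),
      RL α (fun s => r ^ (-(1 / p.toReal)) * f (s / r)) t =
        r ^ (α t - 1 / p.toReal) * RL (fun u => α (r * u)) f (t / r) :=
  stmt_8_general p r hr α f
end
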